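/- arXiv:0704.0755 — 3 statements merged into one kernel-verified Lean document; each statement's English description precedes it below -/
import Mathlib

section
/- Let R be a commutative ring, n a natural number, and A an n×n matrix over R. Suppose the characteristic polynomial of A factors as p = X^d · g for some natural number d and some polynomial g over R (so d is at most the lowest degree of p). Then for every natural number k with k ≥ d, the sum over m from 0 to n − d of (coefficient of x^m in g) • A^(k+m) is the zero matrix; i.e., for k ≥ d the powers of A satisfy a linear recurrence of order n − d. -/
/-!
By Cayley–Hamilton, `A ^ d * g(A) = 0`, hence `A ^ k * g(A) = 0` for every `k ≥ d`. Since
`charpoly A` has degree at most `n`, the factor `g` has degree at most `n - d`, and expanding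
`A ^ k * g(A)` in powers of `A` gives exactly the recurrence.
-/

open Polynomial

theorem Polynomial.natDegree_le_sub_of_natDegree_X_pow_mul_le {R : Type*} [Semiring R]
    {d N : ℕ} {g : R[X]} (h : (X ^ d * g).natDegree ≤ N) : g.natDegree ≤ N - d := by
  refine natDegree_le_iff_coeff_eq_zero.mpr fun m hm => ?_
  rw [← coeff_X_pow_mul g d m]
  exact coeff_eq_zero_of_natDegree_lt (by omega)

theorem Polynomial.pow_mul_aeval_eq_sum_range {R S : Type*} [CommSemiring R] [Semiring S]
    [Algebra R S] {g : R[X]} {N : ℕ} (hN : g.natDegree < N) (a : S) (k : ℕ) :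
    a ^ k * aeval a g = ∑ m ∈ Finset.range N, g.coeff m • a ^ (k + m) := by
  simp only [aeval_eq_sum_range' hN, Finset.mul_sum, mul_smul_comm, pow_add]

theorem Matrix.charpoly_natDegree_le {R n : Type*} [CommRing R] [Fintype n] [DecidableEq n]
    (M : Matrix n n R) : M.charpoly.natDegree ≤ Fintype.card n := by
  nontriviality R
  exact M.charpoly_natDegree_eq_dim.le

theorem stmt_2 (R : Type*) [CommRing R] (n : ℕ) (A : Matrix (Fin n) (Fin n) R)
    (d : ℕ) (g : Polynomial R)
    (h : Matrix.charpoly A = Polynomial.X ^ d * g) :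
    ∀ k : ℕ, d ≤ k →
      ∑ m ∈ Finset.range (n - d + 1), g.coeff m • A ^ (k + m) = 0 := by
  intro k hk
  have hdeg : g.natDegree < n - d + 1 := by
    have := A.charpoly_natDegree_le
    rw [h, Fintype.card_fin] at this
    exact Nat.lt_succ_of_le (natDegree_le_sub_of_natDegree_X_pow_mul_le this)
  have cayleyHamilton : A ^ d * aeval A g = 0 := by
    simpa [h] using A.aeval_self_charpoly
  calc ∑ m ∈ Finset.range (n - d + 1), g.coeff m • A ^ (k + m)
      = A ^ (k - d) * (A ^ d * aeval A g) := by
        rw [← mul_assoc, ← pow_add, Nat.sub_add_cancel hk, pow_mul_aeval_eq_sum_range hdeg]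
    _ = 0 := by rw [cayleyHamilton, mul_zero]
end

section
/- Let A be the 3×3 integer matrix with rows (4, −2, 2), (−5, 7, −5), (−6, 6, −4). Then for every natural number k, A^k equals the matrix with rows (−2^k + 2·3^k, 2^(k+1) − 2·3^k, −2^(k+1) + 2·3^k), (−5·3^k + 5·2^k, 5·3^k − 4·2^k, −5·3^k + 5·2^k), (6·2^k − 6·3^k, −6·2^k + 6·3^k, −6·3^k + 7·2^k). -/
/-! The eigenvalues of `A` are `2` (twice) and `3`, and `A` is diagonalizable, so
`A = 2 • E + 3 • (1 - E)` with `E` the spectral projection onto the `2`-eigenspace.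
Since `E` and `1 - E` are complementary idempotents, `A ^ k = 2 ^ k • E + 3 ^ k • (1 - E)`. -/

theorem IsIdempotentElem.smul_add_smul_one_sub_pow {R A : Type*} [CommSemiring R] [Ring A]
    [Algebra R A] {e : A} (he : IsIdempotentElem e) (a b : R) (k : ℕ) :
    (a • e + b • (1 - e)) ^ k = a ^ k • e + b ^ k • (1 - e) := by
  have hef : e * (1 - e) = 0 := by rw [mul_sub, mul_one, he.eq, sub_self]
  have hfe : (1 - e) * e = 0 := by rw [sub_mul, one_mul, he.eq, sub_self]
  induction k with
  | zero => simp
  | succ k ih =>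
    rw [pow_succ, ih]
    simp only [add_mul, mul_add, smul_mul_smul_comm, he.eq, he.one_sub.eq, hef, hfe,
      smul_zero, add_zero, zero_add, pow_succ]

theorem stmt_4 (k : ℕ) :
    (!![4, -2, 2; -5, 7, -5; -6, 6, -4] : Matrix (Fin 3) (Fin 3) ℤ) ^ k =
      !![-(2 : ℤ) ^ k + 2 * 3 ^ k, 2 ^ (k + 1) - 2 * 3 ^ k, -(2 : ℤ) ^ (k + 1) + 2 * 3 ^ k;
         -5 * 3 ^ k + 5 * 2 ^ k, 5 * 3 ^ k - 4 * 2 ^ k, -5 * 3 ^ k + 5 * 2 ^ k;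
         6 * 2 ^ k - 6 * 3 ^ k, -6 * 2 ^ k + 6 * 3 ^ k, -6 * 3 ^ k + 7 * 2 ^ k] := by
  set E : Matrix (Fin 3) (Fin 3) ℤ := !![-1, 2, -2; 5, -4, 5; 6, -6, 7]
  have hE : IsIdempotentElem E := by
    ext i j; fin_cases i <;> fin_cases j <;> simp [E, Matrix.mul_apply, Fin.sum_univ_succ]
  have hA : (!![4, -2, 2; -5, 7, -5; -6, 6, -4] : Matrix (Fin 3) (Fin 3) ℤ)
      = (2 : ℤ) • E + (3 : ℤ) • (1 - E) := by
    ext i j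
    simp only [Matrix.add_apply, Matrix.smul_apply, Matrix.sub_apply, Matrix.one_apply]
    fin_cases i <;> fin_cases j <;> simp [E]
  rw [hA, hE.smul_add_smul_one_sub_pow]
  ext i j
  simp only [Matrix.add_apply, Matrix.smul_apply, Matrix.sub_apply, Matrix.one_apply]
  fin_cases i <;> fin_cases j <;> simp [E, pow_succ] <;> ring
end

section
/- Let A be the 5×5 real matrix with rows (0,0,1,0,1), (1,0,0,0,1), (0,0,0,1,1), (0,1,0,0,1), (1,1,1,1,0). Then for every natural number k, the (1,5) entry of A^k (using 1-based indexing of rows and columns) equals −(√17/17)·(1/2 − √17/2)^k + (√17/17)·(1/2 + √17/2)^k. -/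
/-!
The last column of `A ^ k` is `A ^ k *ᵥ e₅`, and `A² e₅ = A e₅ + 4 e₅`. Hence every coordinate of
`A ^ k *ᵥ e₅` satisfies `u (k + 2) = u (k + 1) + 4 u k`, whose characteristic roots are
`r, s = (1 ± √17) / 2`. The first coordinate starts with `u 0 = 0`, `u 1 = 1`, so it is the Lucas
sequence `(r ^ k - s ^ k) / (r - s)`, and `r - s = √17`.
-/

open Matrix

theorem sub_mul_eq_pow_sub_pow_of_recurrence {R : Type*} [CommRing R] {r s : R} {u : ℕ → R}
    (h0 : u 0 = 0) (h1 : u 1 = 1)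
    (hrec : ∀ n, u (n + 2) = (r + s) * u (n + 1) - r * s * u n) (n : ℕ) :
    (r - s) * u n = r ^ n - s ^ n := by
  induction n using Nat.twoStepInduction with
  | zero => simp [h0]
  | one => simp [h1]
  | more n ih₀ ih₁ =>
    rw [hrec, mul_sub, mul_left_comm, ih₁, mul_left_comm, ih₀]
    ring

theorem Matrix.pow_add_two_mulVec {n R : Type*} [Fintype n] [DecidableEq n] [CommRing R]
    {M : Matrix n n R} {v : n → R} {p q : R} (h : M ^ 2 *ᵥ v = p • (M *ᵥ v) - q • v) (k : ℕ) :
    M ^ (k + 2) *ᵥ v = p • (M ^ (k + 1) *ᵥ v) - q • (M ^ k *ᵥ v) := by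
  rw [pow_add, ← mulVec_mulVec, h, mulVec_sub, mulVec_smul, mulVec_smul, mulVec_mulVec, ← pow_succ]

theorem stmt_7 (k : ℕ) :
    ((!![0,0,1,0,1; 1,0,0,0,1; 0,0,0,1,1; 0,1,0,0,1; 1,1,1,1,0] :
        Matrix (Fin 5) (Fin 5) ℝ) ^ k) 0 4 =
      -(Real.sqrt 17 / 17) * (1 / 2 - Real.sqrt 17 / 2) ^ k +
        (Real.sqrt 17 / 17) * (1 / 2 + Real.sqrt 17 / 2) ^ k := by
  set A : Matrix (Fin 5) (Fin 5) ℝ := !![0,0,1,0,1; 1,0,0,0,1; 0,0,0,1,1; 0,1,0,0,1; 1,1,1,1,0]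
  set e : Fin 5 → ℝ := Pi.single 4 1
  set r : ℝ := 1 / 2 + √17 / 2
  set s : ℝ := 1 / 2 - √17 / 2
  have h17 : √17 ^ 2 = 17 := Real.sq_sqrt (by norm_num)
  have hprod : r * s = -4 := by linear_combination (-1 / 4 : ℝ) * h17
  have hA2 : A ^ 2 *ᵥ e = (r + s) • (A *ᵥ e) - (r * s) • e := by
    rw [show r + s = 1 by ring, hprod, sq, ← mulVec_mulVec]
    ext i
    fin_cases i <;> simp [A, e, mulVec, dotProduct, Fin.sum_univ_five]; norm_num
  have hlucas : √17 * (A ^ k *ᵥ e) 0 = r ^ k - s ^ k := by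
    rw [show √17 = r - s by ring]
    exact sub_mul_eq_pow_sub_pow_of_recurrence (u := fun k ↦ (A ^ k *ᵥ e) 0)
      (by simp [e]) (by simp [A, e]) (fun n ↦ congrFun (A.pow_add_two_mulVec hA2 n) 0) k
  rw [show (A ^ k) 0 4 = (A ^ k *ᵥ e) 0 by simp [e]]
  linear_combination (√17 / 17) * hlucas - ((A ^ k *ᵥ e) 0 / 17) * h17
end
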